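/- arXiv:1208.5371 — 2 statements merged into one kernel-verified Lean document; each statement's English description precedes it below -/
import Mathlib

section
/- Let 𝔉 be a union-closed family of subsets of X = {a₁,…,aₙ}, let f, g ∈ 𝔉, and let σ, θ be permutations of X. Then f ≠ g if and only if the intervals [f, φ_{wθ}(f)] and [g, φ_{wσ}(g)] are disjoint, where [A,B] = {D ⊆ X : A ⊆ D ⊆ B} and φ_{wθ} is the rising function with respect to the word wθ = θ(a₁)θ(a₂)…θ(aₙ). -/
open Finset

variable {α : Type*} [DecidableEq α]

/-- A family is union-closed if it is closed under pairwise unions. -/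
def UnionClosed (F : Finset (Finset α)) : Prop := ∀ f ∈ F, ∀ g ∈ F, f ∪ g ∈ F

/-- One rising step: φ_{S,a}(z) = z ∪ {a} if z ∪ {a} ∉ S, and z otherwise. -/
def riseStep (S : Finset (Finset α)) (a : α) (z : Finset α) : Finset α :=
  if insert a z ∈ S then z else insert a z

/-- Iterated rising function along a word (list of letters): at each step the
current family is replaced by its image and the next letter is risen. -/
def riseWord (S : Finset (Finset α)) : List α → Finset α → Finset α
  | [], z => z
  | a :: u, z => riseWord (S.image (riseStep S a)) u (riseStep S a z)

/-- The section of a family along (a prefix of) a word. -/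
def riseSections (S : Finset (Finset α)) : List α → Finset (Finset α)
  | [] => S
  | a :: u => riseSections (S.image (riseStep S a)) u

lemma subset_riseStep (S : Finset (Finset α)) (a : α) (z : Finset α) :
    z ⊆ riseStep S a z := by
  unfold riseStep; split
  · exact Finset.Subset.rfl
  · exact Finset.subset_insert a z

lemma subset_riseWord (S : Finset (Finset α)) (u : List α) (z : Finset α) :
    z ⊆ riseWord S u z := by
  induction u generalizing S z with
  | nil => exact Finset.Subset.rfl
  | cons a v ih =>
    exact (subset_riseStep S a z).trans (ih (S.image (riseStep S a)) (riseStep S a z))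

lemma unionClosed_image (S : Finset (Finset α)) (hS : UnionClosed S) (a : α) :
    UnionClosed (S.image (riseStep S a)) := by
  intro f hf g hg
  obtain ⟨f₀, hf₀, rfl⟩ := Finset.mem_image.mp hf
  obtain ⟨g₀, hg₀, rfl⟩ := Finset.mem_image.mp hg
  by_cases hif : insert a f₀ ∈ S <;> by_cases hig : insert a g₀ ∈ S
  · rw [riseStep, if_pos hif, riseStep, if_pos hig]
    refine Finset.mem_image.mpr ⟨f₀ ∪ g₀, hS _ hf₀ _ hg₀, ?_⟩
    rw [riseStep, if_pos]
    rw [← Finset.insert_union]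
    exact hS _ hif _ hg₀
  · rw [riseStep, if_pos hif, riseStep, if_neg hig]
    have hm : insert a (f₀ ∪ g₀) ∈ S := by
      rw [← Finset.insert_union]; exact hS _ hif _ hg₀
    refine Finset.mem_image.mpr ⟨insert a (f₀ ∪ g₀), hm, ?_⟩
    rw [riseStep, if_pos (by rwa [Finset.insert_idem]), Finset.union_insert]
  · rw [riseStep, if_neg hif, riseStep, if_pos hig]
    have hm : insert a (f₀ ∪ g₀) ∈ S := by
      rw [← Finset.union_insert]; exact hS _ hf₀ _ hig
    refine Finset.mem_image.mpr ⟨insert a (f₀ ∪ g₀), hm, ?_⟩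
    rw [riseStep, if_pos (by rwa [Finset.insert_idem]), Finset.insert_union]
  · rw [riseStep, if_neg hif, riseStep, if_neg hig]
    have hm : f₀ ∪ g₀ ∈ S := hS _ hf₀ _ hg₀
    by_cases hiu : insert a (f₀ ∪ g₀) ∈ S
    · refine Finset.mem_image.mpr ⟨insert a (f₀ ∪ g₀), hiu, ?_⟩
      rw [riseStep, if_pos (by rwa [Finset.insert_idem]), Finset.insert_union,
        Finset.union_insert, Finset.insert_idem]
    · refine Finset.mem_image.mpr ⟨f₀ ∪ g₀, hm, ?_⟩
      rw [riseStep, if_neg hiu, Finset.insert_union, Finset.union_insert,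
        Finset.insert_idem]

lemma key_lemma (u : List α) (S : Finset (Finset α)) (hS : UnionClosed S)
    (f h : Finset α) (hf : f ∈ S) (hh : h ∈ S) (hfh : f ⊆ h)
    (hsub : h ⊆ riseWord S u f) : h ⊆ f := by
  induction u generalizing S f h with
  | nil => exact hsub
  | cons a v ih =>
    rw [riseWord] at hsub
    set S' := S.image (riseStep S a) with hS'def
    have hS' : UnionClosed S' := unionClosed_image S hS a
    by_cases hif : insert a f ∈ S
    · have hstep : riseStep S a f = f := if_pos hif
      rw [hstep] at hsub
      have hia : insert a h ∈ S := by
        have := hS _ hif _ hh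
        rwa [Finset.insert_union, Finset.union_eq_right.mpr hfh] at this
      have hh' : h ∈ S' := Finset.mem_image.mpr ⟨h, hh, if_pos hia⟩
      have hf' : f ∈ S' := Finset.mem_image.mpr ⟨f, hf, hstep⟩
      exact ih S' hS' f h hf' hh' hfh hsub
    · have hstep : riseStep S a f = insert a f := if_neg hif
      rw [hstep] at hsub
      have hf' : insert a f ∈ S' := Finset.mem_image.mpr ⟨f, hf, hstep⟩
      have haR : insert a f ⊆ riseWord S' v (insert a f) :=
        subset_riseWord S' v (insert a f)
      have hsub2 : insert a h ⊆ riseWord S' v (insert a f) :=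
        Finset.insert_subset (haR (Finset.mem_insert_self a f)) hsub
      by_cases hih : insert a h ∈ S
      · have hh' : insert a h ∈ S' :=
          Finset.mem_image.mpr ⟨insert a h, hih, if_pos (by rwa [Finset.insert_idem])⟩
        have hle := ih S' hS' (insert a f) (insert a h) hf' hh'
          (Finset.insert_subset_insert a hfh) hsub2
        have heq : insert a f = insert a h :=
          Finset.Subset.antisymm (Finset.insert_subset_insert a hfh) hle
        exact absurd (heq ▸ hih) hif
      · have hanh : a ∉ h := fun ha => hih (by rwa [Finset.insert_eq_self.mpr ha])
        have hh' : insert a h ∈ S' := Finset.mem_image.mpr ⟨h, hh, if_neg hih⟩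
        have hle := ih S' hS' (insert a f) (insert a h) hf' hh'
          (Finset.insert_subset_insert a hfh) hsub2
        intro x hx
        rcases Finset.mem_insert.mp (hle (Finset.mem_insert_of_mem hx)) with rfl | h2
        · exact absurd hx hanh
        · exact h2

/-- Proposition 3.8: for f, g ∈ 𝔉 and permutations σ, θ of X, f ≠ g iff the
intervals [f, φ_{wθ}(f)] and [g, φ_{wσ}(g)] are disjoint. -/
theorem stmt_5 {α : Type*} [DecidableEq α] [Fintype α]
    (F : Finset (Finset α)) (hF : UnionClosed F)
    (w : List α) (hnd : w.Nodup) (hall : ∀ x : α, x ∈ w)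
    (f g : Finset α) (hf : f ∈ F) (hg : g ∈ F)
    (σ θ : Equiv.Perm α) :
    f ≠ g ↔ ∀ D : Finset α,
      ¬(f ⊆ D ∧ D ⊆ riseWord F (w.map θ) f ∧
        g ⊆ D ∧ D ⊆ riseWord F (w.map σ) g) := by
  constructor
  · rintro hne D ⟨hfD, hDθ, hgD, hDσ⟩
    have h1 : f ∪ g ⊆ riseWord F (w.map θ) f :=
      (Finset.union_subset hfD hgD).trans hDθ
    have h2 : f ∪ g ⊆ riseWord F (w.map σ) g :=
      (Finset.union_subset hfD hgD).trans hDσ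
    have hfg : f ∪ g ∈ F := hF f hf g hg
    have hle1 : f ∪ g ⊆ f :=
      key_lemma (w.map θ) F hF f (f ∪ g) hf hfg Finset.subset_union_left h1
    have hle2 : f ∪ g ⊆ g :=
      key_lemma (w.map σ) F hF g (f ∪ g) hg hfg Finset.subset_union_right h2
    exact hne (Finset.Subset.antisymm
      ((Finset.subset_union_left).trans hle2)
      ((Finset.subset_union_right).trans hle1))
  · intro hD heq
    subst heq
    exact hD f ⟨Finset.Subset.rfl, subset_riseWord F (w.map θ) f,
      Finset.Subset.rfl, subset_riseWord F (w.map σ) f⟩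
end

section
/- Let 𝔉 be a union-closed family of subsets of X = {a₁,…,aₙ}, let g ∈ 𝔉 and let η be a maximal element of Fib(g). Then for any word u = a_{i₁}…a_{iₙ} (an ordering of X) having a prefix containing η \ η*, the rising function with respect to u satisfies φ_u(g) = η. -/
open Finset

variable {α : Type*} [DecidableEq α]

/-- The set of minimal elements of a family (under inclusion). -/
def minsF (F : Finset (Finset α)) : Finset (Finset α) :=
  F.filter fun h => ∀ g ∈ F, g ⊆ h → g = h

/-- The operator z ↦ z* = ⋃ { h ∈ F : h ⊆ z }. -/
def starOp (F : Finset (Finset α)) (z : Finset α) : Finset α :=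
  (F.filter fun f => f ⊆ z).sup id

/-- The fiber Fib(g) = { h ∈ min(F)↑ : h* = g }. -/
def FibS (F : Finset (Finset α)) (g : Finset α) : Set (Finset α) :=
  {h | (∃ m ∈ minsF F, m ⊆ h) ∧ starOp F h = g}

lemma riseStep_subset (S : Finset (Finset α)) (a : α) (z : Finset α) :
    riseStep S a z ⊆ insert a z := by
  unfold riseStep; split <;> simp [Finset.subset_insert]

lemma riseStep_of_mem (S : Finset (Finset α)) (a : α) (z : Finset α)
    (h : insert a z ∈ S) : riseStep S a z = z := by
  unfold riseStep; simp [h]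

lemma insert_mem_riseImage (S : Finset (Finset α)) (a : α) {m : Finset α} (hm : m ∈ S) :
    insert a m ∈ S.image (riseStep S a) := by
  by_cases h : insert a m ∈ S
  · exact Finset.mem_image.2 ⟨insert a m, h, by simp [riseStep, Finset.insert_idem, h]⟩
  · exact Finset.mem_image.2 ⟨m, hm, by simp [riseStep, h]⟩

lemma sup_mem_of_unionClosed {F G : Finset (Finset α)} (hF : UnionClosed F)
    (hG : ∀ x ∈ G, x ∈ F) (hne : G.Nonempty) : G.sup id ∈ F := by
  classical
  induction G using Finset.induction_on with
  | empty => exact absurd hne (by simp)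
  | @insert a s ha ih =>
    rcases s.eq_empty_or_nonempty with rfl | hs
    · simpa using hG a (by simp)
    · rw [Finset.sup_insert]
      exact hF a (hG a (by simp)) _ (ih (fun x hx => hG x (by simp [hx])) hs)

lemma unionClosed_riseImage {S : Finset (Finset α)} (hS : UnionClosed S) (a : α) :
    UnionClosed (S.image (riseStep S a)) := by
  intro x hx y hy
  obtain ⟨z, hz, rfl⟩ := Finset.mem_image.1 hx
  obtain ⟨w, hw, rfl⟩ := Finset.mem_image.1 hy
  unfold riseStep
  by_cases h1 : insert a z ∈ S <;> by_cases h2 : insert a w ∈ S <;> simp only [h1, h2, if_true, if_false]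
  · -- z ∪ w, with insert a (z∪w) ∈ S
    have : insert a (z ∪ w) ∈ S := by
      have := hS _ h1 _ h2
      simpa [Finset.insert_union, Finset.union_insert] using this
    exact Finset.mem_image.2 ⟨z ∪ w, hS _ hz _ hw, by simp [riseStep, this]⟩
  · -- z ∪ insert a w = insert a (z ∪ w) ∈ S
    have hmem : insert a (z ∪ w) ∈ S := by
      have := hS _ h1 _ hw
      simpa [Finset.insert_union] using this
    refine Finset.mem_image.2 ⟨insert a (z ∪ w), hmem, ?_⟩
    simp [riseStep, Finset.insert_idem, hmem, Finset.union_insert]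
  · have hmem : insert a (z ∪ w) ∈ S := by
      have := hS _ hz _ h2
      simpa [Finset.union_insert] using this
    refine Finset.mem_image.2 ⟨insert a (z ∪ w), hmem, ?_⟩
    simp [riseStep, Finset.insert_idem, hmem, Finset.insert_union]
  · by_cases h3 : insert a (z ∪ w) ∈ S
    · refine Finset.mem_image.2 ⟨insert a (z ∪ w), h3, ?_⟩
      simp [riseStep, Finset.insert_idem, h3, Finset.insert_union, Finset.union_insert]
    · refine Finset.mem_image.2 ⟨z ∪ w, hS _ hz _ hw, ?_⟩
      simp [riseStep, h3, Finset.insert_union, Finset.union_insert]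

lemma riseStep_eq_or (S : Finset (Finset α)) (a : α) (z : Finset α) :
    riseStep S a z = z ∨ riseStep S a z = insert a z := by
  unfold riseStep; split <;> simp

lemma riseWord_eq_of_inv (F : Finset (Finset α)) (hF : UnionClosed F)
    (g η : Finset α) (hg : g ∈ F) (hgη : g ⊆ η)
    (hstar : ∀ f ∈ F, f ⊆ η → f ⊆ g)
    (hA : ∀ d, d ∉ η → ∃ f ∈ F, d ∈ f ∧ f ⊆ insert d η) :
    ∀ (v : List α) (S : Finset (Finset α)) (P z : Finset α),
      UnionClosed S →
      (∀ x ∈ S, ∃ f ∈ F, f ⊆ x ∧ x ⊆ f ∪ P) →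
      (∀ C : Finset α, (∀ c ∈ C, c ∉ η) →
        (S.filter fun x => x ⊆ η ∪ C).sup id
          = (F.filter fun x => x ⊆ η ∪ C).sup id ∪ (η ∩ P)) →
      z = g ∪ (η ∩ P) → z ∈ S →
      v.Nodup → (∀ a ∈ v, a ∉ P) →
      (∃ l, (v.take l).toFinset = (η \ g) \ P) →
      (∀ x : α, x ∈ P ∨ x ∈ v) →
      riseWord S v z = η := by
  intro v
  induction v with
  | nil =>
    intro S P z _ _ _ h4 _ _ _ _ h7
    have hηP : η ∩ P = η := by
      apply Finset.inter_eq_left.2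
      intro x hx
      rcases h7 x with h | h
      · exact h
      · simp at h
    show z = η
    rw [h4, hηP]
    exact Finset.union_eq_right.2 hgη
  | cons d v ih =>
    intro S P z h1 h2 h3 h4 h4' h5 h5' h6 h7
    have hdP : d ∉ P := h5' d (by simp)
    have hdv : d ∉ v := (List.nodup_cons.1 h5).1
    have hzη : z ⊆ η := by
      rw [h4]; exact Finset.union_subset hgη Finset.inter_subset_left
    have hzfil : ∀ C : Finset α, z ∈ S.filter fun x => x ⊆ η ∪ C := fun C =>
      Finset.mem_filter.2 ⟨h4', hzη.trans Finset.subset_union_left⟩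
    have hMmem : ∀ C : Finset α, (S.filter fun x => x ⊆ η ∪ C).sup id ∈ S := fun C =>
      sup_mem_of_unionClosed h1 (fun x hx => (Finset.mem_filter.1 hx).1) ⟨z, hzfil C⟩
    have hMsub : ∀ C : Finset α, (S.filter fun x => x ⊆ η ∪ C).sup id ⊆ η ∪ C := by
      intro C
      show (S.filter fun x => x ⊆ η ∪ C).sup id ≤ η ∪ C
      apply Finset.sup_le
      intro x hx
      exact Finset.le_iff_subset.2 (Finset.mem_filter.1 hx).2
    have hgF : ∀ C : Finset α, g ⊆ (F.filter fun x => x ⊆ η ∪ C).sup id := by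
      intro C
      have hmem : g ∈ F.filter fun x => x ⊆ η ∪ C :=
        Finset.mem_filter.2 ⟨hg, hgη.trans Finset.subset_union_left⟩
      exact Finset.le_sup (f := id) hmem
    have hcF : ∀ C : Finset α, ∀ c ∈ C, c ∉ η →
        c ∈ (F.filter fun x => x ⊆ η ∪ C).sup id := by
      intro C c hc hcη
      obtain ⟨f, hfF, hcf, hfsub⟩ := hA c hcη
      have hfmem : f ∈ F.filter fun x => x ⊆ η ∪ C := by
        refine Finset.mem_filter.2 ⟨hfF, hfsub.trans ?_⟩
        intro x hx
        rcases Finset.mem_insert.1 hx with rfl | hx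
        · exact Finset.mem_union_right _ hc
        · exact Finset.mem_union_left _ hx
      have hle : f ⊆ (F.filter fun x => x ⊆ η ∪ C).sup id := Finset.le_sup (f := id) hfmem
      exact hle hcf
    have hSle : ∀ C : Finset α, ∀ x ∈ S, x ⊆ η ∪ C →
        x ⊆ (S.filter fun y => y ⊆ η ∪ C).sup id := by
      intro C x hx hsub
      have hmem : x ∈ S.filter fun y => y ⊆ η ∪ C := Finset.mem_filter.2 ⟨hx, hsub⟩
      exact Finset.le_sup (f := id) hmem
    have hpref : d ∉ η → (η \ g) ⊆ P := by
      intro hdη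
      obtain ⟨l, hl⟩ := h6
      cases l with
      | zero =>
        simp only [List.take_zero, List.toFinset_nil] at hl
        exact Finset.sdiff_eq_empty_iff_subset.1 hl.symm
      | succ l =>
        exfalso
        have hd : d ∈ ((d :: v).take (l + 1)).toFinset := by
          simp [List.take_succ_cons]
        rw [hl] at hd
        exact hdη (Finset.mem_sdiff.1 (Finset.mem_sdiff.1 hd).1).1
    -- key: for d outside η, insert d (sup of the C-box) stays in S
    have hkey : d ∉ η → ∀ C : Finset α, (∀ c ∈ C, c ∉ η) →
        insert d ((S.filter fun x => x ⊆ η ∪ C).sup id) ∈ S := by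
      intro hdη C hC
      by_cases hdM : d ∈ (S.filter fun x => x ⊆ η ∪ C).sup id
      · rw [Finset.insert_eq_self.2 hdM]; exact hMmem C
      · have hC' : ∀ c ∈ insert d C, c ∉ η := by
          intro c hc
          rcases Finset.mem_insert.1 hc with rfl | hc
          · exact hdη
          · exact hC c hc
        have hMeq := h3 C hC
        have hM'eq := h3 (insert d C) hC'
        have hηPM : η ∩ P ⊆ (S.filter fun x => x ⊆ η ∪ C).sup id := by
          rw [hMeq]; exact Finset.subset_union_right
        have hFM : (F.filter fun x => x ⊆ η ∪ C).sup id
            ⊆ (S.filter fun x => x ⊆ η ∪ C).sup id := by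
          rw [hMeq]; exact Finset.subset_union_left
        have heq : insert d ((S.filter fun x => x ⊆ η ∪ C).sup id)
            = (S.filter fun x => x ⊆ η ∪ insert d C).sup id := by
          apply Finset.Subset.antisymm
          · apply Finset.insert_subset
            · rw [hM'eq]
              exact Finset.mem_union_left _
                (hcF (insert d C) d (Finset.mem_insert_self d C) hdη)
            · show (S.filter fun x => x ⊆ η ∪ C).sup id
                ≤ (S.filter fun x => x ⊆ η ∪ insert d C).sup id
              apply Finset.sup_le
              intro x hx
              have hx' := Finset.mem_filter.1 hx
              exact hSle (insert d C) x hx'.1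
                (hx'.2.trans (Finset.union_subset_union_right (Finset.subset_insert d C)))
          · rw [hM'eq]
            apply Finset.union_subset
            · show (F.filter fun x => x ⊆ η ∪ insert d C).sup id
                ≤ insert d ((S.filter fun x => x ⊆ η ∪ C).sup id)
              apply Finset.sup_le
              intro f hf
              have hf' := Finset.mem_filter.1 hf
              intro x hx
              have hxm := hf'.2 hx
              rcases Finset.mem_union.1 hxm with hxη | hxC
              · by_cases hxg : x ∈ g
                · exact Finset.mem_insert_of_mem (hFM (hgF C hxg))
                · exact Finset.mem_insert_of_mem
                    (hηPM (Finset.mem_inter.2 ⟨hxη, hpref hdη (Finset.mem_sdiff.2 ⟨hxη, hxg⟩)⟩))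
              · rcases Finset.mem_insert.1 hxC with rfl | hxC
                · exact Finset.mem_insert_self _ _
                · exact Finset.mem_insert_of_mem (hFM (hcF C x hxC (hC x hxC)))
            · exact fun x hx => Finset.mem_insert_of_mem (hηPM hx)
        rw [heq]
        exact hMmem (insert d C)
    have hzS0 : z = (S.filter fun x => x ⊆ η ∪ (∅ : Finset α)).sup id := by
      have hFg : (F.filter fun x => x ⊆ η ∪ (∅ : Finset α)).sup id = g := by
        apply Finset.Subset.antisymm
        · show (F.filter fun x => x ⊆ η ∪ (∅ : Finset α)).sup id ≤ g
          apply Finset.sup_le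
          intro f hf
          have hf' := Finset.mem_filter.1 hf
          exact Finset.le_iff_subset.2 (hstar f hf'.1 (by simpa using hf'.2))
        · exact hgF ∅
      rw [h3 ∅ (by simp), hFg, ← h4]
    show riseWord (S.image (riseStep S d)) v (riseStep S d z) = η
    refine ih (S.image (riseStep S d)) (insert d P) (riseStep S d z)
      ?_ ?_ ?_ ?_ ?_ ?_ ?_ ?_ ?_
    · exact unionClosed_riseImage h1 d
    · intro x hx
      obtain ⟨y, hy, rfl⟩ := Finset.mem_image.1 hx
      obtain ⟨f, hfF, hf1, hf2⟩ := h2 y hy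
      refine ⟨f, hfF, hf1.trans (subset_riseStep S d y), ?_⟩
      refine (riseStep_subset S d y).trans ?_
      intro t ht
      rcases Finset.mem_insert.1 ht with rfl | ht
      · exact Finset.mem_union_right _ (Finset.mem_insert_self _ _)
      · rcases Finset.mem_union.1 (hf2 ht) with h | h
        · exact Finset.mem_union_left _ h
        · exact Finset.mem_union_right _ (Finset.mem_insert_of_mem h)
    · intro C hC
      by_cases hdη : d ∈ η
      · have hins : η ∩ insert d P = insert d (η ∩ P) := by
          rw [Finset.inter_comm, Finset.insert_inter_of_mem hdη, Finset.inter_comm]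
        rw [hins]
        have hR : (F.filter fun x => x ⊆ η ∪ C).sup id ∪ insert d (η ∩ P)
            = insert d ((S.filter fun x => x ⊆ η ∪ C).sup id) := by
          rw [h3 C hC, Finset.union_insert]
        rw [hR]
        apply Finset.Subset.antisymm
        · show ((S.image (riseStep S d)).filter fun x => x ⊆ η ∪ C).sup id
            ≤ insert d ((S.filter fun x => x ⊆ η ∪ C).sup id)
          apply Finset.sup_le
          intro y hy
          have hy' := Finset.mem_filter.1 hy
          obtain ⟨x, hx, rfl⟩ := Finset.mem_image.1 hy'.1
          have hxM : x ⊆ (S.filter fun x => x ⊆ η ∪ C).sup id :=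
            hSle C x hx ((subset_riseStep S d x).trans hy'.2)
          exact Finset.le_iff_subset.2
            ((riseStep_subset S d x).trans (Finset.insert_subset_insert _ hxM))
        · have hmem : insert d ((S.filter fun x => x ⊆ η ∪ C).sup id)
              ∈ (S.image (riseStep S d)).filter fun x => x ⊆ η ∪ C := by
            refine Finset.mem_filter.2 ⟨insert_mem_riseImage S d (hMmem C), ?_⟩
            exact Finset.insert_subset (Finset.mem_union_left _ hdη) (hMsub C)
          exact Finset.le_sup (f := id) hmem
      · have hins : η ∩ insert d P = η ∩ P := by
          rw [Finset.inter_comm, Finset.insert_inter_of_notMem hdη, Finset.inter_comm]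
        rw [hins, ← h3 C hC]
        apply Finset.Subset.antisymm
        · show ((S.image (riseStep S d)).filter fun x => x ⊆ η ∪ C).sup id
            ≤ (S.filter fun x => x ⊆ η ∪ C).sup id
          apply Finset.sup_le
          intro y hy
          have hy' := Finset.mem_filter.1 hy
          obtain ⟨x, hx, rfl⟩ := Finset.mem_image.1 hy'.1
          have hxM : x ⊆ (S.filter fun x => x ⊆ η ∪ C).sup id :=
            hSle C x hx ((subset_riseStep S d x).trans hy'.2)
          rcases riseStep_eq_or S d x with he | he
          · rw [he]; exact Finset.le_iff_subset.2 hxM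
          · rw [he] at hy' ⊢
            have hdC : d ∈ C := by
              rcases Finset.mem_union.1 (hy'.2 (Finset.mem_insert_self d x)) with h | h
              · exact absurd h hdη
              · exact h
            have hdM : d ∈ (S.filter fun x => x ⊆ η ∪ C).sup id := by
              rw [h3 C hC]
              exact Finset.mem_union_left _ (hcF C d hdC hdη)
            exact Finset.le_iff_subset.2 (Finset.insert_subset hdM hxM)
        · have hMS' : (S.filter fun x => x ⊆ η ∪ C).sup id ∈ S.image (riseStep S d) := by
            have hstep := riseStep_of_mem S d _ (hkey hdη C hC)
            exact hstep ▸ Finset.mem_image_of_mem _ (hMmem C)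
          have hmem : (S.filter fun x => x ⊆ η ∪ C).sup id
              ∈ (S.image (riseStep S d)).filter fun x => x ⊆ η ∪ C :=
            Finset.mem_filter.2 ⟨hMS', hMsub C⟩
          exact Finset.le_sup (f := id) hmem
    · by_cases hdη : d ∈ η
      · have hins : η ∩ insert d P = insert d (η ∩ P) := by
          rw [Finset.inter_comm, Finset.insert_inter_of_mem hdη, Finset.inter_comm]
        by_cases hdg : d ∈ g
        · have hdz : d ∈ z := by rw [h4]; exact Finset.mem_union_left _ hdg
          have hzz : insert d z = z := Finset.insert_eq_self.2 hdz
          have h1' : riseStep S d z = z := riseStep_of_mem S d z (by rw [hzz]; exact h4')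
          rw [h1', hins, Finset.union_insert, ← h4, hzz]
        · have hdz : d ∉ z := by
            rw [h4]
            intro h
            rcases Finset.mem_union.1 h with h | h
            · exact hdg h
            · exact hdP (Finset.mem_inter.1 h).2
          have hnin : insert d z ∉ S := by
            intro hmem
            obtain ⟨f, hfF, hf1, hf2⟩ := h2 _ hmem
            have hfη : f ⊆ η := hf1.trans (Finset.insert_subset hdη hzη)
            have hfg := hstar f hfF hfη
            have hd' : d ∈ f ∪ P := hf2 (Finset.mem_insert_self d z)
            rcases Finset.mem_union.1 hd' with h | h
            · exact hdg (hfg h)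
            · exact hdP h
          have h1' : riseStep S d z = insert d z := if_neg hnin
          rw [h1', hins, Finset.union_insert, ← h4]
      · have hins : η ∩ insert d P = η ∩ P := by
          rw [Finset.inter_comm, Finset.insert_inter_of_notMem hdη, Finset.inter_comm]
        have hinS : insert d z ∈ S := by
          rw [hzS0]
          exact hkey hdη ∅ (by simp)
        rw [riseStep_of_mem S d z hinS, hins, ← h4]
    · exact Finset.mem_image_of_mem _ h4'
    · exact (List.nodup_cons.1 h5).2
    · intro a ha hmem
      rcases Finset.mem_insert.1 hmem with rfl | hP
      · exact hdv ha
      · exact h5' a (List.mem_cons_of_mem d ha) hP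
    · obtain ⟨l, hl⟩ := h6
      cases l with
      | zero =>
        refine ⟨0, ?_⟩
        simp only [List.take_zero, List.toFinset_nil] at hl ⊢
        have hsub : η \ g ⊆ P := Finset.sdiff_eq_empty_iff_subset.1 hl.symm
        exact (Finset.sdiff_eq_empty_iff_subset.2 (hsub.trans (Finset.subset_insert d P))).symm
      | succ l =>
        refine ⟨l, ?_⟩
        have hl' : insert d (v.take l).toFinset = (η \ g) \ P := by
          simpa [List.take_succ_cons] using hl
        ext x
        constructor
        · intro hx
          have hx' := List.mem_toFinset.1 hx
          have hxv : x ∈ v := List.take_subset l v hx'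
          have hxd : x ≠ d := fun h => hdv (h ▸ hxv)
          have hmem : x ∈ (η \ g) \ P := by
            rw [← hl']
            exact Finset.mem_insert_of_mem hx
          have h' := Finset.mem_sdiff.1 hmem
          refine Finset.mem_sdiff.2 ⟨h'.1, ?_⟩
          intro hins
          rcases Finset.mem_insert.1 hins with rfl | hP
          · exact hxd rfl
          · exact h'.2 hP
        · intro hx
          have h' := Finset.mem_sdiff.1 hx
          have hxP : x ∉ P := fun h => h'.2 (Finset.mem_insert_of_mem h)
          have hxd : x ≠ d := fun h => h'.2 (h ▸ Finset.mem_insert_self d P)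
          have hmem : x ∈ insert d (v.take l).toFinset := by
            rw [hl']
            exact Finset.mem_sdiff.2 ⟨h'.1, hxP⟩
          rcases Finset.mem_insert.1 hmem with rfl | h
          · exact absurd rfl hxd
          · exact h
    · intro x
      rcases h7 x with h | h
      · exact Or.inl (Finset.mem_insert_of_mem h)
      · rcases List.mem_cons.1 h with rfl | h
        · exact Or.inl (Finset.mem_insert_self _ _)
        · exact Or.inr h

/-- Lemma (word generating a maximal fiber element): if η is a maximal element of
Fib(g), then for any word u (listing X) having a prefix containing η \ η*,
φ_u(g) = η. -/
theorem stmt_7 {α : Type*} [DecidableEq α] [Fintype α]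
    (F : Finset (Finset α)) (hF : UnionClosed F)
    (g : Finset α) (hg : g ∈ F)
    (η : Finset α) (hηFib : η ∈ FibS F g)
    (hmax : ∀ η' ∈ FibS F g, η ⊆ η' → η' = η)
    (u : List α) (hnd : u.Nodup) (hall : ∀ x : α, x ∈ u)
    (hpre : ∃ l ≤ u.length, η \ starOp F η = (u.take l).toFinset) :
    riseWord F u g = η := by
  obtain ⟨hmins, hstar_eq⟩ := hηFib
  have hgη : g ⊆ η := by
    rw [← hstar_eq]
    show starOp F η ≤ η
    apply Finset.sup_le
    intro f hf
    exact Finset.le_iff_subset.2 (Finset.mem_filter.1 hf).2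
  have hstar : ∀ f ∈ F, f ⊆ η → f ⊆ g := by
    intro f hf hsub
    rw [← hstar_eq]
    have hmem : f ∈ F.filter fun x => x ⊆ η := Finset.mem_filter.2 ⟨hf, hsub⟩
    exact Finset.le_sup (f := id) hmem
  have hA : ∀ d, d ∉ η → ∃ f ∈ F, d ∈ f ∧ f ⊆ insert d η := by
    intro d hdη
    by_contra hcon
    push_neg at hcon
    have hfil : F.filter (fun f => f ⊆ insert d η) = F.filter (fun f => f ⊆ η) := by
      ext f
      simp only [Finset.mem_filter]
      constructor
      · rintro ⟨hf, hsub⟩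
        by_cases hdf : d ∈ f
        · exact absurd hsub (hcon f hf hdf)
        · exact ⟨hf, fun x hx =>
            (Finset.mem_insert.1 (hsub hx)).resolve_left (fun h => hdf (h ▸ hx))⟩
      · rintro ⟨hf, hsub⟩
        exact ⟨hf, hsub.trans (Finset.subset_insert _ _)⟩
    have hFib' : insert d η ∈ FibS F g := by
      constructor
      · obtain ⟨m, hm, hmη⟩ := hmins
        exact ⟨m, hm, hmη.trans (Finset.subset_insert _ _)⟩
      · show starOp F (insert d η) = g
        unfold starOp
        rw [hfil]
        exact hstar_eq
    have := hmax _ hFib' (Finset.subset_insert _ _)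
    exact hdη (this ▸ Finset.mem_insert_self d η)
  obtain ⟨l, -, hl⟩ := hpre
  refine riseWord_eq_of_inv F hF g η hg hgη hstar hA u F ∅ g hF
    (fun x hx => ⟨x, hx, subset_rfl, by simp⟩)
    (fun C _ => by simp)
    (by simp) hg hnd (by simp) ⟨l, ?_⟩ (fun x => Or.inr (hall x))
  rw [← hl, hstar_eq]
  simp
end
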